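/- arXiv:2406.14165 — 6 statements merged into one kernel-verified Lean document; each statement's English description precedes it below -/
import Mathlib

section
/- Makespan approximation guarantee of weighted greedy job assignment (robustness of AllocationScaledGreedy): let t ∈ ℝ_{≥0}^{n×m} be job processing times, let r ∈ ℝ^{n×m} with 1 ≤ r_{ij} ≤ n/β for all i,j where 1 ≤ β ≤ n, and let the assignment a give each job j to a machine i_j minimizing r_{ij}·t_{ij} over i. Then the makespan of a is at most (n²/β) times the optimal makespan: max_i Σ_{j : i_j = i} t_{ij} ≤ (n²/β) · min over assignments σ of max_i Σ_{j : σ(j) = i} t_{ij}. -/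
/-! Charging each job to the machine the comparison schedule `σ` uses for it: greedy minimality of
`r * t` and `1 ≤ r ≤ n / β` give `t (i_j) j ≤ (n / β) · t (σ j) j`, so every greedy load is at most
`n / β` times the total work of `σ`, which is at most `n` times its makespan. -/

open Finset

namespace Scheduling

variable {ι κ : Type*}

theorem le_mul_of_weighted_min {r t : ι → κ → ℝ} {c : ℝ} (ht : ∀ i j, 0 ≤ t i j)
    (hr : ∀ i j, 1 ≤ r i j ∧ r i j ≤ c) {a : κ → ι}
    (hmin : ∀ j i, r (a j) j * t (a j) j ≤ r i j * t i j) (j : κ) (i : ι) :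
    t (a j) j ≤ c * t i j :=
  calc t (a j) j ≤ r (a j) j * t (a j) j := le_mul_of_one_le_left (ht _ _) (hr _ _).1
    _ ≤ r i j * t i j := hmin j i
    _ ≤ c * t i j := mul_le_mul_of_nonneg_right (hr i j).2 (ht i j)

variable [Fintype κ] [DecidableEq ι]

def load (σ : κ → ι) (t : ι → κ → ℝ) (i : ι) : ℝ :=
  ∑ j ∈ univ.filter (fun j => σ j = i), t i j

theorem load_le_sum (σ : κ → ι) {t : ι → κ → ℝ} (ht : ∀ i j, 0 ≤ t i j) (i : ι) :
    load σ t i ≤ ∑ j, t (σ j) j :=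
  calc load σ t i = ∑ j ∈ univ.filter (fun j => σ j = i), t (σ j) j :=
        sum_congr rfl fun j hj => by rw [(mem_filter.mp hj).2]
    _ ≤ ∑ j, t (σ j) j :=
        sum_le_sum_of_subset_of_nonneg (filter_subset _ _) fun j _ _ => ht _ _

variable [Fintype ι]

theorem sum_load (σ : κ → ι) (t : ι → κ → ℝ) : ∑ i, load σ t i = ∑ j, t (σ j) j := by
  rw [← sum_fiberwise univ σ (fun j => t (σ j) j)]
  refine sum_congr rfl fun i _ => sum_congr rfl fun j hj => ?_
  rw [(mem_filter.mp hj).2]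

theorem sum_le_card_mul_sup'_load (hne : (univ : Finset ι).Nonempty) (σ : κ → ι)
    (t : ι → κ → ℝ) : ∑ j, t (σ j) j ≤ Fintype.card ι * univ.sup' hne (load σ t) := by
  rw [← sum_load, ← nsmul_eq_mul]
  exact sum_le_card_nsmul _ _ _ fun i hi => le_sup' (load σ t) hi

theorem sup'_load_le_of_le_mul (hne : (univ : Finset ι).Nonempty) {t : ι → κ → ℝ}
    (ht : ∀ i j, 0 ≤ t i j) {c : ℝ} (hc : 0 ≤ c) {a : κ → ι} (σ : κ → ι)
    (hle : ∀ j, t (a j) j ≤ c * t (σ j) j) :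
    univ.sup' hne (load a t) ≤ c * Fintype.card ι * univ.sup' hne (load σ t) :=
  sup'_le _ _ fun i _ =>
    calc load a t i ≤ ∑ j, t (a j) j := load_le_sum a ht i
      _ ≤ c * ∑ j, t (σ j) j := by rw [mul_sum]; exact sum_le_sum fun j _ => hle j
      _ ≤ c * Fintype.card ι * univ.sup' hne (load σ t) := by
        rw [mul_assoc]; exact mul_le_mul_of_nonneg_left (sum_le_card_mul_sup'_load hne σ t) hc

end Scheduling

open Scheduling in
theorem stmt_7_general (n m : ℕ) (hne : (Finset.univ : Finset (Fin n)).Nonempty)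
    (t : Fin n → Fin m → ℝ) (ht : ∀ i j, 0 ≤ t i j)
    (β : ℝ) (hβ1 : 1 ≤ β)
    (r : Fin n → Fin m → ℝ) (hr : ∀ i j, 1 ≤ r i j ∧ r i j ≤ n / β)
    (ij : Fin m → Fin n) (hmin : ∀ j i, r (ij j) j * t (ij j) j ≤ r i j * t i j)
    (σ : Fin m → Fin n) :
    Finset.univ.sup' hne (fun i => ∑ j ∈ Finset.univ.filter (fun j => ij j = i), t i j)
      ≤ ((n : ℝ) ^ 2 / β) *
        Finset.univ.sup' hne (fun i => ∑ j ∈ Finset.univ.filter (fun j => σ j = i), t i j) := by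
  have hc : (0 : ℝ) ≤ n / β := div_nonneg n.cast_nonneg (zero_le_one.trans hβ1)
  have key := sup'_load_le_of_le_mul hne ht hc σ fun j =>
    le_mul_of_weighted_min ht hr hmin j (σ j)
  rwa [Fintype.card_fin, div_mul_eq_mul_div, ← sq] at key

/-- Robustness of AllocationScaledGreedy: the weighted greedy assignment has makespan
    at most (n²/β) times the optimal makespan. -/
theorem stmt_7 (n m : ℕ) (hne : (Finset.univ : Finset (Fin n)).Nonempty)
    (t : Fin n → Fin m → ℝ) (ht : ∀ i j, 0 ≤ t i j)
    (β : ℝ) (hβ1 : 1 ≤ β) (hβn : β ≤ n)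
    (r : Fin n → Fin m → ℝ) (hr : ∀ i j, 1 ≤ r i j ∧ r i j ≤ n / β)
    (ij : Fin m → Fin n) (hmin : ∀ j i, r (ij j) j * t (ij j) j ≤ r i j * t i j)
    (σ : Fin m → Fin n) :
    Finset.univ.sup' hne (fun i => ∑ j ∈ Finset.univ.filter (fun j => ij j = i), t i j)
      ≤ ((n : ℝ) ^ 2 / β) *
        Finset.univ.sup' hne (fun i => ∑ j ∈ Finset.univ.filter (fun j => σ j = i), t i j) :=
  stmt_7_general n m hne t ht β hβ1 r hr ij hmin σ
end

section
/- Consistency of AllocationScaledGreedy: let t ∈ ℝ_{≥0}^{n×m}, let â : [m] → [n] be an assignment achieving the minimum makespan OPT, and set r_{ij} = 1 if â(j) = i and r_{ij} = n/β otherwise, where 1 ≤ β ≤ n. If each job j is assigned to some i_j ∈ argmin_i r_{ij} t_{ij}, then the resulting makespan is at most (((n−1)/n)·β + 1)·OPT. -/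
/-!
A job that the greedy rule moves off its recommended machine `â j` onto machine `i` costs
there at most `β / n` times its cost on `â j`. So the load of `i` is at most its own load
under `â` (at most `OPT`) plus `β / n` times the total load of the other `n - 1` machines
under `â` (at most `(n - 1) OPT`).
-/

open Finset

section Load

variable {ι J : Type*} [Fintype ι] [DecidableEq ι] [Fintype J]

def load (σ : J → ι) (t : ι → J → ℝ) (i : ι) : ℝ :=
  ∑ j ∈ univ.filter (fun j => σ j = i), t i j

theorem sum_load (σ : J → ι) (t : ι → J → ℝ) :
    ∑ k, load σ t k = ∑ j, t (σ j) j := by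
  rw [← sum_fiberwise univ σ (fun j => t (σ j) j)]
  refine sum_congr rfl fun k _ => sum_congr rfl fun j hj => ?_
  rw [(mem_filter.1 hj).2]

theorem sum_filter_ne_eq_sum_erase_load (σ : J → ι) (t : ι → J → ℝ) (i : ι) :
    ∑ j ∈ univ.filter (fun j => σ j ≠ i), t (σ j) j = ∑ k ∈ univ.erase i, load σ t k := by
  have hi : load σ t i = ∑ j ∈ univ.filter (fun j => σ j = i), t (σ j) j :=
    sum_congr rfl fun j hj => by rw [(mem_filter.1 hj).2]
  have htotal := sum_load σ t
  rw [← add_sum_erase _ _ (mem_univ i), hi,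
    ← sum_filter_add_sum_filter_not univ (fun j => σ j = i)] at htotal
  linarith

theorem sum_erase_le_card_sub_one_mul (f : ι → ℝ) (M : ℝ) (hf : ∀ k, f k ≤ M) (i : ι) :
    ∑ k ∈ univ.erase i, f k ≤ ((Fintype.card ι : ℝ) - 1) * M := by
  have hcard : ((univ.erase i).card : ℝ) = (Fintype.card ι : ℝ) - 1 := by
    rw [card_erase_of_mem (mem_univ i), card_univ,
      Nat.cast_sub (Fintype.card_pos_iff.2 ⟨i⟩), Nat.cast_one]
  calc ∑ k ∈ univ.erase i, f k ≤ (univ.erase i).card • M :=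
        sum_le_card_nsmul _ _ _ fun k _ => hf k
    _ = ((Fintype.card ι : ℝ) - 1) * M := by rw [nsmul_eq_mul, hcard]

variable {σ τ : J → ι} {t : ι → J → ℝ} {c : ℝ}

theorem load_le_load_add_inv_mul_sum_erase (hc : 0 < c) (ht : ∀ i j, 0 ≤ t i j)
    (hmove : ∀ j, σ j ≠ τ j → c * t (σ j) j ≤ t (τ j) j) (i : ι) :
    load σ t i ≤ load τ t i + c⁻¹ * ∑ k ∈ univ.erase i, load τ t k := by
  set S := univ.filter (fun j => σ j = i)
  have hstay : ∑ j ∈ S.filter (fun j => τ j = i), t i j ≤ load τ t i :=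
    sum_le_sum_of_subset_of_nonneg (fun j hj => by simp_all [S]) fun j _ _ => ht i j
  have hmoved : ∑ j ∈ S.filter (fun j => τ j ≠ i), t i j
      ≤ c⁻¹ * ∑ j ∈ univ.filter (fun j => τ j ≠ i), t (τ j) j := by
    rw [mul_sum]
    calc ∑ j ∈ S.filter (fun j => τ j ≠ i), t i j
        ≤ ∑ j ∈ S.filter (fun j => τ j ≠ i), c⁻¹ * t (τ j) j := by
          refine sum_le_sum fun j hj => ?_
          simp only [S, mem_filter, mem_univ, true_and] at hj
          obtain ⟨rfl, hτ⟩ := hj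
          rw [le_inv_mul_iff₀ hc]
          exact hmove j (Ne.symm hτ)
      _ ≤ ∑ j ∈ univ.filter (fun j => τ j ≠ i), c⁻¹ * t (τ j) j :=
          sum_le_sum_of_subset_of_nonneg (fun j hj => by simp_all [S])
            fun j _ _ => mul_nonneg (inv_nonneg.2 hc.le) (ht _ j)
  rw [← sum_filter_ne_eq_sum_erase_load]
  calc load σ t i = ∑ j ∈ S.filter (fun j => τ j = i), t i j
        + ∑ j ∈ S.filter (fun j => ¬τ j = i), t i j :=
        (sum_filter_add_sum_filter_not _ _ _).symm
    _ ≤ _ := add_le_add hstay hmoved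

theorem load_le_of_forall_load_le (hc : 0 < c) (ht : ∀ i j, 0 ≤ t i j)
    (hmove : ∀ j, σ j ≠ τ j → c * t (σ j) j ≤ t (τ j) j) {M : ℝ}
    (hM : ∀ k, load τ t k ≤ M) (i : ι) :
    load σ t i ≤ (1 + c⁻¹ * ((Fintype.card ι : ℝ) - 1)) * M := by
  have hrest := sum_erase_le_card_sub_one_mul _ M hM i
  calc load σ t i ≤ load τ t i + c⁻¹ * ∑ k ∈ univ.erase i, load τ t k :=
        load_le_load_add_inv_mul_sum_erase hc ht hmove i
    _ ≤ M + c⁻¹ * (((Fintype.card ι : ℝ) - 1) * M) :=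
        add_le_add (hM i) (mul_le_mul_of_nonneg_left hrest (inv_nonneg.2 hc.le))
    _ = _ := by ring

end Load

theorem stmt_8_general (n m : ℕ) (hne : (Finset.univ : Finset (Fin n)).Nonempty)
    (t : Fin n → Fin m → ℝ) (ht : ∀ i j, 0 ≤ t i j)
    (β : ℝ) (hβ1 : 1 ≤ β)
    (ahat : Fin m → Fin n)
    (r : Fin n → Fin m → ℝ)
    (hr : ∀ i j, r i j = if ahat j = i then 1 else (n : ℝ) / β)
    (ij : Fin m → Fin n) (hmin : ∀ j i, r (ij j) j * t (ij j) j ≤ r i j * t i j) :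
    Finset.univ.sup' hne (fun i => ∑ j ∈ Finset.univ.filter (fun j => ij j = i), t i j)
      ≤ (((n : ℝ) - 1) / n * β + 1) *
        Finset.univ.sup' hne (fun i => ∑ j ∈ Finset.univ.filter (fun j => ahat j = i), t i j) := by
  have hn : (0 : ℝ) < n := by exact_mod_cast hne.card_pos.trans_eq (card_fin n)
  have hβ : 0 < β := one_pos.trans_le hβ1
  have hmove : ∀ j, ij j ≠ ahat j → (n : ℝ) / β * t (ij j) j ≤ t (ahat j) j := by
    intro j hj
    simpa [hr, hj, Ne.symm hj] using hmin j (ahat j)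
  refine sup'_le _ _ fun i _ => ?_
  have hOPT : ∀ k, load ahat t k ≤ univ.sup' hne (load ahat t) :=
    fun k => le_sup' (load ahat t) (mem_univ k)
  have hbound := load_le_of_forall_load_le (div_pos hn hβ) ht hmove hOPT i
  rw [Fintype.card_fin, inv_div] at hbound
  refine hbound.trans_eq ?_
  rw [add_comm, div_mul_comm β]
  rfl

/-- Consistency of AllocationScaledGreedy: if the recommendation â is an optimal
    assignment, the mechanism's makespan is at most ((n−1)/n·β + 1)·OPT. -/
theorem stmt_8 (n m : ℕ) (hne : (Finset.univ : Finset (Fin n)).Nonempty)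
    (t : Fin n → Fin m → ℝ) (ht : ∀ i j, 0 ≤ t i j)
    (β : ℝ) (hβ1 : 1 ≤ β) (hβn : β ≤ n)
    (ahat : Fin m → Fin n)
    (hopt : ∀ σ : Fin m → Fin n,
      Finset.univ.sup' hne (fun i => ∑ j ∈ Finset.univ.filter (fun j => ahat j = i), t i j)
        ≤ Finset.univ.sup' hne (fun i => ∑ j ∈ Finset.univ.filter (fun j => σ j = i), t i j))
    (r : Fin n → Fin m → ℝ)
    (hr : ∀ i j, r i j = if ahat j = i then 1 else (n : ℝ) / β)
    (ij : Fin m → Fin n) (hmin : ∀ j i, r (ij j) j * t (ij j) j ≤ r i j * t i j) :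
    Finset.univ.sup' hne (fun i => ∑ j ∈ Finset.univ.filter (fun j => ij j = i), t i j)
      ≤ (((n : ℝ) - 1) / n * β + 1) *
        Finset.univ.sup' hne (fun i => ∑ j ∈ Finset.univ.filter (fun j => ahat j = i), t i j) :=
  stmt_8_general n m hne t ht β hβ1 ahat r hr ij hmin
end

section
/- Lower-bound instance for AllocationScaledGreedy: fix n ≥ 2 machines, n−1 jobs, β ∈ [1,n], ρ ∈ (0, n/β], ε ∈ (0, βρ/n). Define t_{ij} = ρ if i = j < n, t_{nj} = βρ/n − ε for all j, and t_{ij} = 1 otherwise. With weights r_{jj} = 1 for j < n and r_{ij} = n/β otherwise, the weighted-greedy assignment (each job j to a minimizer of r_{ij}t_{ij}, with strict inequality forcing machine n) assigns all n−1 jobs to machine n, achieving makespan (n−1)(βρ/n − ε), while the assignment sending job j to machine j+1 cyclically (or any bijection avoiding matches) attains makespan at most max(1, βρ(n−1)/n). -/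
/-!
On machine `n` every job has scaled cost `(n/β)(βρ/n − ε) = ρ − nε/β`, which is strictly below both
`ρ` (the scaled cost of job `j` on machine `j`) and `n/β` (its scaled cost on any other machine,
using `ρ ≤ n/β`), so weighted greedy piles all `n − 1` jobs onto machine `n`. The shifted
assignment `j ↦ j + 1` is injective, so every machine carries at most one job, of cost `1` or
`βρ/n − ε`.
-/

open Finset

section Makespan

variable {ι κ : Type*} [Fintype ι] [Fintype κ] [DecidableEq ι]

def makespan (hne : (univ : Finset ι).Nonempty) (t : ι → κ → ℝ) (σ : κ → ι) : ℝ :=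
  univ.sup' hne fun i => ∑ j ∈ univ.filter (fun j => σ j = i), t i j

theorem makespan_const (hne : (univ : Finset ι).Nonempty) (t : ι → κ → ℝ) (m : ι)
    (hm : 0 ≤ ∑ j, t m j) : makespan hne t (fun _ => m) = ∑ j, t m j := by
  apply le_antisymm
  · refine sup'_le _ _ fun i _ => ?_
    obtain rfl | hi := eq_or_ne m i
    · simp
    · simpa [hi] using hm
  · calc ∑ j, t m j = ∑ j ∈ univ.filter (fun _ : κ => m = m), t m j := by simp
      _ ≤ makespan hne t (fun _ => m) :=
        le_sup' (fun i => ∑ j ∈ univ.filter (fun _ : κ => m = i), t i j) (mem_univ m)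

theorem makespan_le_of_injective (hne : (univ : Finset ι).Nonempty) (t : ι → κ → ℝ)
    {σ : κ → ι} (hσ : Function.Injective σ) {M : ℝ} (hM : 0 ≤ M)
    (ht : ∀ j, t (σ j) j ≤ M) : makespan hne t σ ≤ M := by
  refine sup'_le _ _ fun i _ => ?_
  by_cases hi : ∃ j, σ j = i
  · obtain ⟨j, rfl⟩ := hi
    have hfilter : univ.filter (fun j' => σ j' = σ j) = {j} := by
      ext j'
      simp [hσ.eq_iff]
    simpa [hfilter] using ht j
  · simpa [filter_false_of_mem fun j _ => not_exists.mp hi j] using hM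

end Makespan

theorem scaled_cost_lt {n β ρ ε c : ℝ} (hn : 0 < n) (hβ : 0 < β) (hε : 0 < ε)
    (hc : ρ ≤ c) : n / β * (β * ρ / n - ε) < c := by
  have hcost : n / β * (β * ρ / n - ε) = ρ - n / β * ε := by field_simp
  have : 0 < n / β * ε := by positivity
  linarith

theorem stmt_11_general (n : ℕ) (hn : 2 ≤ n) (hne : (Finset.univ : Finset (Fin n)).Nonempty)
    (β ρ ε : ℝ) (hβ1 : 1 ≤ β)
    (hρ0 : 0 < ρ) (hρn : ρ ≤ n / β) (hε0 : 0 < ε) (hε : ε < β * ρ / n)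
    (t r : Fin n → Fin (n - 1) → ℝ)
    (jm : Fin (n - 1) → Fin n) (hjm : ∀ j : Fin (n - 1), (jm j : ℕ) = (j : ℕ))
    (last : Fin n) (hlast : (last : ℕ) = n - 1)
    (ht1 : ∀ j, t (jm j) j = ρ)
    (ht2 : ∀ j, t last j = β * ρ / n - ε)
    (ht3 : ∀ i j, i ≠ jm j → i ≠ last → t i j = 1)
    (hr1 : ∀ j, r (jm j) j = 1)
    (hr2 : ∀ i j, i ≠ jm j → r i j = n / β) :
    (∀ (j : Fin (n - 1)) (i : Fin n), i ≠ last → r last j * t last j < r i j * t i j) ∧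
    Finset.univ.sup' hne
        (fun i => ∑ j ∈ Finset.univ.filter (fun j : Fin (n - 1) => last = i), t i j)
      = (n - 1) * (β * ρ / n - ε) ∧
    ∀ σ : Fin (n - 1) → Fin n, (∀ j, (σ j : ℕ) = (j : ℕ) + 1) →
      Finset.univ.sup' hne
          (fun i => ∑ j ∈ Finset.univ.filter (fun j : Fin (n - 1) => σ j = i), t i j)
        ≤ max 1 (β * ρ * (n - 1) / n) := by
  have hβ : 0 < β := by linarith
  have hn2 : (2 : ℝ) ≤ n := by exact_mod_cast hn
  have hlast_ne : ∀ j, last ≠ jm j := fun j h => by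
    have := congrArg Fin.val h
    have := hjm j
    omega
  refine ⟨fun j i hi => ?_, ?_, fun σ hσ => ?_⟩
  · rw [hr2 _ _ (hlast_ne j), ht2]
    by_cases hij : i = jm j
    · rw [hij, hr1, ht1, one_mul]
      exact scaled_cost_lt (by linarith) hβ hε0 le_rfl
    · rw [hr2 _ _ hij, ht3 _ _ hij hi, mul_one]
      exact scaled_cost_lt (by linarith) hβ hε0 hρn
  · have hsum : ∑ j, t last j = (n - 1) * (β * ρ / n - ε) := by
      rw [Fintype.sum_congr _ _ ht2, sum_const, card_univ, Fintype.card_fin, nsmul_eq_mul,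
        Nat.cast_sub (by omega : 1 ≤ n), Nat.cast_one]
    change makespan hne t (fun _ => last) = _
    rw [makespan_const _ _ _ (hsum ▸ mul_nonneg (by linarith) (by linarith)), hsum]
  · have hσ_inj : Function.Injective σ := fun a b h => Fin.ext (by
      have := congrArg Fin.val h
      rw [hσ, hσ] at this
      omega)
    refine makespan_le_of_injective hne t hσ_inj (le_max_of_le_left zero_le_one) fun j => ?_
    by_cases hj : σ j = last
    · have hbound : β * ρ / n ≤ β * ρ * (n - 1) / n :=
        div_le_div_of_nonneg_right (le_mul_of_one_le_right (by positivity) (by linarith))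
          (by positivity)
      rw [hj, ht2]
      exact le_max_of_le_right (by linarith)
    · have hσj : σ j ≠ jm j := fun h => by
        have := congrArg Fin.val h
        rw [hσ, hjm] at this
        omega
      rw [ht3 _ _ hσj hj]
      exact le_max_left _ _

/-- Lower-bound instance for AllocationScaledGreedy: weighted greedy sends all n−1 jobs
    to machine n, with makespan (n−1)(βρ/n − ε), while spreading the jobs
    (job j to machine j+1) achieves makespan at most max(1, βρ(n−1)/n). -/
theorem stmt_11 (n : ℕ) (hn : 2 ≤ n) (hne : (Finset.univ : Finset (Fin n)).Nonempty)
    (β ρ ε : ℝ) (hβ1 : 1 ≤ β) (hβn : β ≤ n)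
    (hρ0 : 0 < ρ) (hρn : ρ ≤ n / β) (hε0 : 0 < ε) (hε : ε < β * ρ / n)
    (t r : Fin n → Fin (n - 1) → ℝ)
    (jm : Fin (n - 1) → Fin n) (hjm : ∀ j : Fin (n - 1), (jm j : ℕ) = (j : ℕ))
    (last : Fin n) (hlast : (last : ℕ) = n - 1)
    (ht1 : ∀ j, t (jm j) j = ρ)
    (ht2 : ∀ j, t last j = β * ρ / n - ε)
    (ht3 : ∀ i j, i ≠ jm j → i ≠ last → t i j = 1)
    (hr1 : ∀ j, r (jm j) j = 1)
    (hr2 : ∀ i j, i ≠ jm j → r i j = n / β) :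
    (∀ (j : Fin (n - 1)) (i : Fin n), i ≠ last → r last j * t last j < r i j * t i j) ∧
    Finset.univ.sup' hne
        (fun i => ∑ j ∈ Finset.univ.filter (fun j : Fin (n - 1) => last = i), t i j)
      = (n - 1) * (β * ρ / n - ε) ∧
    ∀ σ : Fin (n - 1) → Fin n, (∀ j, (σ j : ℕ) = (j : ℕ) + 1) →
      Finset.univ.sup' hne
          (fun i => ∑ j ∈ Finset.univ.filter (fun j : Fin (n - 1) => σ j = i), t i j)
        ≤ max 1 (β * ρ * (n - 1) / n) :=
  stmt_11_general n hn hne β ρ ε hβ1 hρ0 hρn hε0 hε t r jm hjm last hlast ht1 ht2 ht3 hr1 hr2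
end

section
/- Linear lower bound instance for TTC with unit-range valuations: for n ≥ 2 and ε ∈ (0,1), consider agents with t_1 = (1−ε at house 1, 1 at house 2, 0 elsewhere) and, for 2 ≤ i ≤ n, t_i(i) = 1, t_i((i mod n)+1) = ε, 0 elsewhere. The allocation a(1) = 2, a(i) = (i mod n)+1 for i ≥ 2 has welfare 1 + (n−1)ε, while the identity allocation has welfare n − ε; hence the ratio of optimal welfare to W(a) is at least (n − ε)/(1 + (n−1)ε). -/
open Finset

theorem Fintype.sum_eq_add_card_sub_one_mul {ι R : Type*} [Fintype ι] [DecidableEq ι]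
    [CommRing R] (f : ι → R) (i₀ : ι) (c : R) (hf : ∀ i, i ≠ i₀ → f i = c) :
    ∑ i, f i = f i₀ + (Fintype.card ι - 1) * c := by
  rw [← add_sum_erase _ _ (mem_univ i₀),
    Finset.sum_congr (g := fun _ => c) rfl fun i hi => hf i (ne_of_mem_erase hi), sum_const,
    card_erase_of_mem (mem_univ i₀), card_univ, nsmul_eq_mul,
    Nat.cast_sub (Fintype.card_pos_iff.mpr ⟨i₀⟩), Nat.cast_one]

theorem stmt_15_general (n : ℕ) [NeZero n] (ε : ℝ)
    (t : Fin n → Fin n → ℝ)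
    (h00 : t 0 0 = 1 - ε) (h01 : t 0 1 = 1)
    (hi : ∀ i : Fin n, i ≠ 0 →
      t i i = 1 ∧ t i (i + 1) = ε ∧ ∀ j : Fin n, j ≠ i → j ≠ i + 1 → t i j = 0)
    (a : Equiv.Perm (Fin n)) (ha : ∀ i, a i = i + 1) :
    ∑ i, t i (a i) = 1 + (n - 1) * ε ∧
    ∑ i, t i i = n - ε ∧
    ∃ a' : Equiv.Perm (Fin n),
      (n - ε) / (1 + (n - 1) * ε) ≤ (∑ i, t i (a' i)) / (∑ i, t i (a i)) := by
  have hshift : ∑ i, t i (a i) = 1 + (n - 1) * ε := by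
    rw [Fintype.sum_eq_add_card_sub_one_mul _ 0 ε fun i hi0 => ha i ▸ (hi i hi0).2.1,
      ha, zero_add, h01, Fintype.card_fin]
  have hid : ∑ i, t i i = n - ε := by
    rw [Fintype.sum_eq_add_card_sub_one_mul _ 0 1 fun i hi0 => (hi i hi0).1, h00,
      Fintype.card_fin]
    ring
  refine ⟨hshift, hid, Equiv.refl _, ?_⟩
  simp only [Equiv.refl_apply, hid, hshift, le_refl]

/-- Linear lower-bound instance for TTC with unit-range valuations (0-indexed): the
    cyclic-shift allocation has welfare 1+(n−1)ε, the identity has welfare n−ε, and the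
    optimal-to-mechanism welfare ratio is at least (n−ε)/(1+(n−1)ε). -/
theorem stmt_15 (n : ℕ) [NeZero n] (hn : 2 ≤ n) (ε : ℝ) (hε0 : 0 < ε) (hε1 : ε < 1)
    (t : Fin n → Fin n → ℝ)
    (h00 : t 0 0 = 1 - ε) (h01 : t 0 1 = 1)
    (h0 : ∀ j : Fin n, 2 ≤ (j : ℕ) → t 0 j = 0)
    (hi : ∀ i : Fin n, i ≠ 0 →
      t i i = 1 ∧ t i (i + 1) = ε ∧ ∀ j : Fin n, j ≠ i → j ≠ i + 1 → t i j = 0)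
    (a : Equiv.Perm (Fin n)) (ha : ∀ i, a i = i + 1) :
    ∑ i, t i (a i) = 1 + (n - 1) * ε ∧
    ∑ i, t i i = n - ε ∧
    ∃ a' : Equiv.Perm (Fin n),
      (n - ε) / (1 + (n - 1) * ε) ≤ (∑ i, t i (a' i)) / (∑ i, t i (a i)) :=
  stmt_15_general n ε t h00 h01 hi a ha
end

section
/- A directed graph on n ≥ 3 vertices in which every vertex has both out-degree and in-degree at least n−2 and n−2 ≥ n/2 (i.e. n ≥ 4) contains a Hamiltonian directed cycle (instance of the Ghouila-Houri theorem). -/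
/-!
Minimum semi-degree `n - 2` says that every vertex misses at most one out-neighbour and at most
one in-neighbour. A vertex `x` outside a path `a → b → ⋯` can then always be inserted: in front
of `a` if `R x a`; otherwise `a` is the only vertex `x` does not point to, so `x` fits between
`a` and `b` if `R a x`, and else, `a` being also the only vertex not pointing to `x`, between `b`
and its successor. Growing an arc in this way yields a Hamiltonian path `a → ⋯ → y → z`. If
`R z a` it closes up. Otherwise `z` is the only vertex not pointing to `a`, so `a → ⋯ → y → a`
is a cycle, into which `z` is inserted right after `a` or after its successor by the same
argument.
-/

open List

variable {α : Type*} {R : α → α → Prop}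

structure IsNearlyComplete (R : α → α → Prop) : Prop where
  out_subsingleton : ∀ x, {y | y ≠ x ∧ ¬ R x y}.Subsingleton
  in_subsingleton : ∀ x, {y | y ≠ x ∧ ¬ R y x}.Subsingleton

namespace IsNearlyComplete

variable {x y z : α}

theorem rel_of_not_rel (h : IsNearlyComplete R) (hy : ¬ R x y) (hyx : y ≠ x) (hzx : z ≠ x)
    (hzy : z ≠ y) : R x z := by
  by_contra hz
  exact hzy (h.out_subsingleton x ⟨hzx, hz⟩ ⟨hyx, hy⟩)

theorem rel_of_not_rel' (h : IsNearlyComplete R) (hy : ¬ R y x) (hyx : y ≠ x) (hzx : z ≠ x)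
    (hzy : z ≠ y) : R z x := by
  by_contra hz
  exact hzy (h.in_subsingleton x ⟨hzx, hz⟩ ⟨hyx, hy⟩)

theorem isChain_insert (h : IsNearlyComplete R) {a b : α} {l : List α}
    (hc : IsChain R (a :: b :: l)) (hxa : ¬ R x a) (hax : a ≠ x) (hbx : b ≠ x) (hba : b ≠ a)
    (hl : ∀ c ∈ l.head?, c ≠ x ∧ c ≠ a) :
    IsChain R (a :: x :: b :: l) ∨ IsChain R (a :: b :: x :: l) := by
  rw [isChain_cons_cons] at hc
  by_cases hax' : R a x
  · exact .inl (hc.2.cons_cons (h.rel_of_not_rel hxa hax hbx hba) |>.cons_cons hax')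
  · have hxl : IsChain R (x :: l) :=
      isChain_cons.2 ⟨fun c hc' => h.rel_of_not_rel hxa hax (hl c hc').1 (hl c hc').2, hc.2.tail⟩
    exact .inr ((hxl.cons_cons (h.rel_of_not_rel' hax' hax hbx hba)).cons_cons hc.1)

theorem exists_perm_cons_isChain (h : IsNearlyComplete R) {l : List α} (hc : IsChain R l)
    (hl : 2 ≤ l.length) (hnd : (x :: l).Nodup) : ∃ l', l' ~ x :: l ∧ IsChain R l' := by
  obtain ⟨a, b, l, rfl⟩ : ∃ a b l', l = a :: b :: l' := by
    rcases l with _ | ⟨a, _ | ⟨b, l⟩⟩ <;> simp_all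
  by_cases hxa : R x a
  · exact ⟨_, .refl _, hc.cons_cons hxa⟩
  obtain ⟨hax, hbx, hba, hl⟩ : a ≠ x ∧ b ≠ x ∧ b ≠ a ∧ ∀ c ∈ l.head?, c ≠ x ∧ c ≠ a := by
    simp only [nodup_cons, mem_cons, not_or] at hnd
    grind [mem_of_mem_head?]
  rcases h.isChain_insert hc hxa hax hbx hba hl with hc' | hc'
  · exact ⟨_, .swap _ _ _, hc'⟩
  · exact ⟨_, perm_middle (l₁ := [a, b]), hc'⟩

theorem exists_isChain_forall_mem_of_isChain [Fintype α] (h : IsNearlyComplete R) {l : List α}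
    (hc : IsChain R l) (hl : 2 ≤ l.length) (hnd : l.Nodup) :
    ∃ l' : List α, l'.Nodup ∧ IsChain R l' ∧ ∀ v, v ∈ l' := by
  by_cases hall : ∀ v, v ∈ l
  · exact ⟨l, hnd, hc, hall⟩
  obtain ⟨x, hx⟩ := not_forall.1 hall
  have hnd' : (x :: l).Nodup := hnd.cons hx
  obtain ⟨l', hperm, hc'⟩ := h.exists_perm_cons_isChain hc hl hnd'
  have hlen : l'.length = l.length + 1 := by simp [hperm.length_eq]
  have hlen_le : l'.length ≤ Fintype.card α := (hperm.nodup_iff.2 hnd').length_le_card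
  exact h.exists_isChain_forall_mem_of_isChain hc' (by omega) (hperm.nodup_iff.2 hnd')
termination_by Fintype.card α - l.length

theorem exists_isChain_forall_mem [Fintype α] (h : IsNearlyComplete R)
    (hcard : 3 ≤ Fintype.card α) : ∃ l : List α, l.Nodup ∧ IsChain R l ∧ ∀ v, v ∈ l := by
  obtain ⟨a, b, c, hab, hac, hbc⟩ := Fintype.two_lt_card_iff.1 hcard
  obtain ⟨d, hd, had⟩ : ∃ d, R a d ∧ d ≠ a := by
    by_cases hb : R a b
    · exact ⟨b, hb, hab.symm⟩
    · exact ⟨c, h.rel_of_not_rel hb hab.symm hac.symm hbc.symm, hac.symm⟩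
  exact h.exists_isChain_forall_mem_of_isChain (IsChain.cons_cons hd (.singleton d)) le_rfl
    (by simp [had.symm])

theorem exists_cons_perm_isChain_append (h : IsNearlyComplete R) {l : List α} (hc : IsChain R l)
    (hl : 4 ≤ l.length) (hnd : l.Nodup) :
    ∃ a t, a :: t ~ l ∧ IsChain R (a :: t ++ [a]) := by
  obtain ⟨a, b, c, m, z, rfl⟩ : ∃ a b c m z, l = a :: b :: c :: m ++ [z] := by
    rcases l with _ | ⟨a, _ | ⟨b, _ | ⟨c, r⟩⟩⟩
    · simp at hl
    · simp at hl
    · simp at hl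
    obtain ⟨m, z, rfl⟩ := (eq_nil_or_concat' r).resolve_left (by rintro rfl; simp at hl)
    exact ⟨a, b, c, m, z, rfl⟩
  by_cases hza : R z a
  · exact ⟨a, _, .refl _, hc.append (.singleton a) (by rw [getLast?_concat]; simpa using hza)⟩
  obtain ⟨haz, hbz, hba, hne⟩ : a ≠ z ∧ b ≠ z ∧ b ≠ a ∧ ∀ y ∈ c :: m, y ≠ z ∧ y ≠ a := by
    simp only [cons_append, nodup_cons, mem_cons, mem_append, nodup_append] at hnd
    grind
  have hcycle : IsChain R (a :: b :: c :: m ++ [a]) := by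
    refine hc.left_of_append.append (.singleton a) fun y hy a' ha' => ?_
    obtain rfl : a = a' := by simpa using ha'
    have hy : y ∈ c :: m := mem_of_getLast? (by simpa using hy)
    exact h.rel_of_not_rel' hza haz.symm (hne y hy).2 (hne y hy).1
  rcases h.isChain_insert (l := c :: m ++ [a]) hcycle hza haz hbz hba
    (by simpa using hne c mem_cons_self) with hc' | hc'
  · exact ⟨a, z :: b :: c :: m, .cons a (perm_append_singleton z _).symm, hc'⟩
  · exact ⟨a, b :: z :: c :: m, .cons a (.cons b (perm_append_singleton z _).symm), hc'⟩

end IsNearlyComplete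

theorem List.rel_formPerm_of_isChain [DecidableEq α] {a v : α} {t : List α}
    (hnd : (a :: t).Nodup) (hc : IsChain R (a :: t ++ [a])) (hv : v ∈ a :: t) :
    R v (formPerm (a :: t) v) := by
  obtain ⟨i, hi, rfl⟩ := getElem_of_mem hv
  have hrel := hc.getElem i (by simp only [length_append, length_cons] at hi ⊢; omega)
  rw [getElem_append_left hi] at hrel
  rw [formPerm_apply_getElem _ hnd]
  rcases Nat.lt_or_ge (i + 1) (a :: t).length with hlt | hge
  · simp only [Nat.mod_eq_of_lt hlt]
    rwa [← getElem_append_left (bs := [a]) hlt]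
  · have heq : i + 1 = (a :: t).length := by omega
    simp only [heq, Nat.mod_self]
    simpa [heq] using hrel

theorem IsNearlyComplete.exists_isCycle_support_eq_univ [Fintype α] [DecidableEq α]
    (h : IsNearlyComplete R) (hcard : 4 ≤ Fintype.card α) :
    ∃ σ : Equiv.Perm α, σ.IsCycle ∧ σ.support = Finset.univ ∧ ∀ v, R v (σ v) := by
  obtain ⟨l, hnd, hc, hall⟩ := h.exists_isChain_forall_mem (by omega)
  have hlen : Fintype.card α ≤ l.length := by
    rw [← toFinset_card_of_nodup hnd, ← Finset.card_univ]
    exact Finset.card_le_card fun v _ => mem_toFinset.2 (hall v)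
  obtain ⟨a, t, hperm, hcyc⟩ := h.exists_cons_perm_isChain_append hc (by omega) hnd
  have hnd' := hperm.nodup_iff.2 hnd
  have hall' : ∀ v, v ∈ a :: t := fun v => hperm.mem_iff.2 (hall v)
  have hlen' : 2 ≤ (a :: t).length := by rw [hperm.length_eq]; omega
  refine ⟨formPerm (a :: t), isCycle_formPerm hnd' hlen', ?_,
    fun v => rel_formPerm_of_isChain hnd' hcyc (hall' v)⟩
  rw [support_formPerm_of_nodup _ hnd' fun x hx => by simp [hx] at hlen']
  exact Finset.eq_univ_of_forall fun v => mem_toFinset.2 (hall' v)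

open Finset in
theorem subsingleton_setOf_not_rel [Fintype α] [DecidableEq α] [DecidableRel R] {x : α}
    (hirr : ¬ R x x) (hdeg : Fintype.card α - 2 ≤ #{y | R x y}) :
    {y | y ≠ x ∧ ¬ R x y}.Subsingleton := by
  rintro a ⟨hax, hxa⟩ b ⟨hbx, hxb⟩
  by_contra hab
  have hsub : ({y | R x y} : Finset α) ⊆ univ \ {x, a, b} := by
    intro w hw
    simp only [Finset.mem_filter, Finset.mem_univ, true_and] at hw
    simp only [mem_sdiff, mem_univ, mem_insert, Finset.mem_singleton, true_and]
    rintro (rfl | rfl | rfl) <;> contradiction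
  have hxab : #{x, a, b} = 3 := card_eq_three.2 ⟨x, a, b, hax.symm, hbx.symm, hab, rfl⟩
  have hcard := card_le_univ ({x, a, b} : Finset α)
  have := card_le_card hsub
  rw [card_sdiff_of_subset (subset_univ _), hxab, card_univ] at this
  omega

open Finset in
theorem IsNearlyComplete.of_card_sub_two_le [Fintype α] [DecidableEq α] [DecidableRel R]
    (hirr : ∀ v, ¬ R v v) (hout : ∀ v, Fintype.card α - 2 ≤ #{w | R v w})
    (hin : ∀ v, Fintype.card α - 2 ≤ #{w | R w v}) : IsNearlyComplete R where
  out_subsingleton x := subsingleton_setOf_not_rel (hirr x) (hout x)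
  in_subsingleton x := subsingleton_setOf_not_rel (R := fun v w => R w v) (hirr x) (hin x)

/-- Ghouila-Houri instance: a loopless digraph on n ≥ 4 vertices with all out- and
    in-degrees at least n−2 contains a Hamiltonian directed cycle. -/
theorem stmt_18 (n : ℕ) (hn : 4 ≤ n) (R : Fin n → Fin n → Prop) [DecidableRel R]
    (hirr : ∀ v, ¬ R v v)
    (hout : ∀ v : Fin n, n - 2 ≤ (Finset.univ.filter (fun w => R v w)).card)
    (hin : ∀ v : Fin n, n - 2 ≤ (Finset.univ.filter (fun w => R w v)).card) :
    ∃ σ : Equiv.Perm (Fin n), σ.IsCycle ∧ σ.support = Finset.univ ∧ ∀ v, R v (σ v) := by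
  have h := IsNearlyComplete.of_card_sub_two_le hirr (by simpa using hout) (by simpa using hin)
  exact h.exists_isCycle_support_eq_univ (by simpa using hn)
end

section
/- Rearrangement claim for distinct matchings: given two distinct permutations a', â of [n] (n ≥ 4), there exist relabelings (permutations) of the agents and houses under which a' becomes the cyclic shift i ↦ (i mod n)+1, â satisfies â(i) ≠ i for all i, and â(1) ≠ 2. -/
/-!
Put `σ = a'⁻¹ â`, which is not the identity. Taking `τ = (· + 1) ∘ π ∘ a'⁻¹` turns `a'` into the
shift, and then `â` becomes `i ↦ π (σ (π⁻¹ i)) + 1`. So it suffices to label the points by `π`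
so that `σ` never sends a point to the point labelled just before it, and to label a non-fixed
point of `σ` by `0`; the latter is free, since the condition is invariant under translating the
labels. Such a labelling is the same as an `n`-cycle `ρ` with `ρ x ≠ σ x` for every `x`.

For `n ≥ 5` the cycle is built greedily: start with a suitable 3-cycle and insert each further
point `p` just before some `x` on the cycle with `x ≠ σ p` and `σ (pred x) ≠ p`; each of the two
conditions excludes at most one `x`, so a cycle of length at least 3 always has room. For `n = 4`
the claim is checked by computation; for `n = 3` it fails when `σ` is a transposition.
-/

open Equiv Finset

theorem Finset.exists_notMem_of_card_lt_card {α : Type*} [Fintype α] {s : Finset α}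
    (h : #s < Fintype.card α) : ∃ x, x ∉ s := by
  by_contra! hs
  exact (card_lt_iff_ne_univ s).1 h (eq_univ_of_forall hs)

namespace List

variable {α : Type*} [DecidableEq α]

theorem formPerm_cons_cons_ne_of_notMem {σ : Equiv.Perm α} {p x : α} {l : List α}
    (hp : p ∉ x :: l) (hl : ∀ y ∈ x :: l, formPerm (x :: l) y ≠ σ y) (hpx : x ≠ σ p)
    (hxp : ∀ y ∈ x :: l, formPerm (x :: l) y = x → σ y ≠ p) :
    ∀ y ∈ p :: x :: l, formPerm (p :: x :: l) y ≠ σ y := by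
  rw [formPerm_cons_cons]
  rintro y (_ | ⟨_, hy⟩)
  · simpa [formPerm_apply_of_notMem hp] using hpx
  · have hyp : formPerm (x :: l) y ≠ p := fun h => hp (h ▸ formPerm_apply_mem_of_mem hy)
    by_cases hyx : formPerm (x :: l) y = x
    · simpa [hyx] using (hxp y hy hyx).symm
    · rw [Equiv.Perm.mul_apply, swap_apply_of_ne_of_ne hyp hyx]
      exact hl y hy

theorem exists_nodup_formPerm_ne_of_notMem {σ : Equiv.Perm α} {l : List α} (hl : l.Nodup)
    (h3 : 3 ≤ l.length) (hσ : ∀ y ∈ l, l.formPerm y ≠ σ y) {p : α} (hp : p ∉ l) :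
    ∃ l' : List α, l'.Nodup ∧ l'.length = l.length + 1 ∧ ∀ y ∈ l', l'.formPerm y ≠ σ y := by
  obtain ⟨x, hx⟩ : ((l.toFinset.erase (σ p)).erase (l.formPerm (σ⁻¹ p))).Nonempty := by
    rw [← Finset.card_pos]
    have h₁ := Finset.pred_card_le_card_erase (s := l.toFinset) (a := σ p)
    have h₂ := Finset.pred_card_le_card_erase (s := l.toFinset.erase (σ p))
      (a := l.formPerm (σ⁻¹ p))
    rw [toFinset_card_of_nodup hl] at h₁
    omega
  simp only [Finset.mem_erase, mem_toFinset] at hx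
  obtain ⟨hxf, hxσ, hxl⟩ := hx
  obtain ⟨s, t, rfl⟩ := append_of_mem hxl
  have hrot : (s ++ x :: t).rotate s.length = x :: (t ++ s) := by
    rw [rotate_append_length_eq, cons_append]
  have hr : (x :: (t ++ s)).Nodup := hrot ▸ nodup_rotate.2 hl
  have hf : formPerm (x :: (t ++ s)) = formPerm (s ++ x :: t) := hrot ▸ formPerm_rotate _ hl _
  have hmem : ∀ y, y ∈ x :: (t ++ s) ↔ y ∈ s ++ x :: t := fun y => hrot ▸ mem_rotate
  have hp' : p ∉ x :: (t ++ s) := (hmem p).not.2 hp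
  refine ⟨p :: x :: (t ++ s), nodup_cons.2 ⟨hp', hr⟩, by simp; omega, ?_⟩
  refine formPerm_cons_cons_ne_of_notMem hp' (fun y hy => hf ▸ hσ y ((hmem y).1 hy)) hxσ ?_
  rintro y - hy rfl
  exact hxf (by simp [← hf, hy])

theorem exists_nodup_length_three_formPerm_ne [Fintype α] (h5 : 5 ≤ Fintype.card α)
    (σ : Equiv.Perm α) :
    ∃ l : List α, l.Nodup ∧ l.length = 3 ∧ ∀ y ∈ l, l.formPerm y ≠ σ y := by
  obtain ⟨u⟩ : Nonempty α := Fintype.card_pos_iff.1 (by omega)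
  obtain ⟨v, hv⟩ := exists_notMem_of_card_lt_card (s := {u, σ u}) (by grind [card_le_two])
  obtain ⟨w, hw⟩ := exists_notMem_of_card_lt_card (s := {u, v, σ v, σ⁻¹ u})
    (by grind [card_le_four])
  simp only [Finset.mem_insert, Finset.mem_singleton, not_or] at hv hw
  obtain ⟨hvu, hvσ⟩ := hv
  obtain ⟨hwu, hwv, hwσ, hwσ'⟩ := hw
  rw [Equiv.Perm.eq_inv_iff_eq] at hwσ'
  refine ⟨[u, v, w], by simp [*, Ne.symm hvu, Ne.symm hwu, Ne.symm hwv], rfl, ?_⟩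
  simp [formPerm_cons_cons, Equiv.swap_apply_def, *, Ne.symm hvu, Ne.symm hwu, Ne.symm hwσ']

theorem exists_nodup_length_formPerm_ne [Fintype α] (h5 : 5 ≤ Fintype.card α)
    (σ : Equiv.Perm α) {m : ℕ} (h3 : 3 ≤ m) (hm : m ≤ Fintype.card α) :
    ∃ l : List α, l.Nodup ∧ l.length = m ∧ ∀ y ∈ l, l.formPerm y ≠ σ y := by
  induction m, h3 using Nat.le_induction with
  | base => exact exists_nodup_length_three_formPerm_ne h5 σ
  | succ m h3 ih =>
    obtain ⟨l, hl, rfl, hσ⟩ := ih (by omega)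
    obtain ⟨p, hp⟩ := exists_notMem_of_card_lt_card (s := l.toFinset)
      (by rw [toFinset_card_of_nodup hl]; omega)
    exact exists_nodup_formPerm_ne_of_notMem hl h3 hσ (by simpa using hp)

end List

namespace Equiv.Perm

theorem exists_isCycle_support_eq_univ_forall_ne {α : Type*} [DecidableEq α] [Fintype α]
    (h5 : 5 ≤ Fintype.card α) (σ : Perm α) :
    ∃ ρ : Perm α, ρ.IsCycle ∧ ρ.support = univ ∧ ∀ x, ρ x ≠ σ x := by
  obtain ⟨l, hl, hlen, hσ⟩ := List.exists_nodup_length_formPerm_ne h5 σ (by omega) le_rfl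
  have huniv : l.toFinset = univ :=
    eq_univ_of_card _ (by rw [List.toFinset_card_of_nodup hl, hlen])
  refine ⟨l.formPerm, List.isCycle_formPerm hl (by omega), ?_, fun x => hσ x ?_⟩
  · rw [List.support_formPerm_of_nodup l hl (fun x hx => by simp [hx] at hlen; omega), huniv]
  · simp [← List.mem_toFinset, huniv]

theorem IsCycle.exists_perm_add_one {n : ℕ} [NeZero n] {ρ : Perm (Fin n)} (hρ : ρ.IsCycle)
    (hs : ρ.support = univ) : ∃ π : Perm (Fin n), ∀ x, π (ρ x) = π x + 1 := by
  have h2 : 2 ≤ n := by simpa [hs] using hρ.two_le_card_support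
  obtain ⟨g, hg⟩ := _root_.isConj_iff.1 <| (isCycle_finRotate_of_le h2).isConj hρ
    (by rw [support_finRotate_of_le h2, hs])
  refine ⟨g⁻¹, fun x => ?_⟩
  rw [← hg, ← finRotate_apply]
  simp

theorem exists_perm_add_one_ne_fin_four :
    ∀ σ : Perm (Fin 4), ∃ π : Perm (Fin 4), ∀ x, π (σ x) + 1 ≠ π x := by
  decide

theorem exists_perm_add_one_ne {n : ℕ} [NeZero n] (hn : 4 ≤ n) (σ : Perm (Fin n)) :
    ∃ π : Perm (Fin n), ∀ x, π (σ x) + 1 ≠ π x := by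
  rcases hn.eq_or_lt with rfl | h5
  · exact exists_perm_add_one_ne_fin_four σ
  obtain ⟨ρ, hρ, hs, hρσ⟩ :=
    exists_isCycle_support_eq_univ_forall_ne (by simpa using h5.nat_succ_le) σ
  obtain ⟨π, hπ⟩ := hρ.inv.exists_perm_add_one (by rw [support_inv, hs])
  refine ⟨π, fun x h => hρσ x (ρ⁻¹.injective (π.injective ?_))⟩
  rw [hπ (σ x), h]
  simp

theorem exists_perm_add_one_ne_apply_eq_zero {n : ℕ} [NeZero n] (hn : 4 ≤ n)
    (σ : Perm (Fin n)) (z : Fin n) :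
    ∃ π : Perm (Fin n), (∀ x, π (σ x) + 1 ≠ π x) ∧ π z = 0 := by
  obtain ⟨π, hπ⟩ := exists_perm_add_one_ne hn σ
  refine ⟨π.trans (Equiv.subRight (π z)), fun x => ?_, by simp⟩
  simpa [sub_add_eq_add_sub] using hπ x

end Equiv.Perm

/-- Rearrangement claim for distinct matchings: two distinct permutations a', â of [n]
    (n ≥ 4) can be relabeled (agents by π, houses by τ) so that a' becomes the cyclic
    shift i ↦ i+1, while the relabeled â has no fixed point and sends 0 somewhere
    other than 1. -/
theorem stmt_19 (n : ℕ) [NeZero n] (hn : 4 ≤ n)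
    (a' ahat : Equiv.Perm (Fin n)) (hne : a' ≠ ahat) :
    ∃ π τ : Equiv.Perm (Fin n),
      (∀ i : Fin n, τ (a' (π.symm i)) = i + 1) ∧
      (∀ i : Fin n, τ (ahat (π.symm i)) ≠ i) ∧
      τ (ahat (π.symm 0)) ≠ 1 := by
  set σ : Equiv.Perm (Fin n) := ahat.trans a'.symm
  obtain ⟨z, hz⟩ : ∃ z, σ z ≠ z := by
    by_contra! h
    exact hne (Equiv.ext fun x => by simpa [σ, eq_symm_apply] using (h x).symm)
  obtain ⟨π, hπ, hπz⟩ := Equiv.Perm.exists_perm_add_one_ne_apply_eq_zero hn σ z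
  have hz' : π.symm 0 = z := π.symm_apply_eq.2 hπz.symm
  refine ⟨π, a'.symm.trans (π.trans (Equiv.addRight 1)), fun i => by simp,
    fun i => by simpa [σ] using hπ (π.symm i), ?_⟩
  simp only [hz', trans_apply, coe_addRight, ne_eq, add_eq_right]
  rw [← hπz]
  exact fun h => hz (π.injective h)
end
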